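/- arXiv:2111.07590 — 4 statements merged into one kernel-verified Lean document; each statement's English description precedes it below -/
import Mathlib

section
/- Let $(C_\bullet, \partial)$ be a chain complex of $\mathbb{Q}$-vector spaces (indexed by $\mathbb{Z}$, with $\partial$ of degree $-1$) such that for some integer $n > 2$: $\dim C_k = 0$ for $0 < k < 2n-4$, $\dim C_k = 1$ for $2n-4 \le k \le 4n-9$, $\dim C_{4n-8} = 3$, and $\dim C_{4n-7} = 2$. Then there exists some positive degree $k$ with $H_k(C_\bullet) \ne 0$. -/
/-!
Suppose the homology vanishes in every positive degree. Since `C_{2n-5} = 0`, the boundary out of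
`C_{2n-4}` is zero, so exactness at `C_{2n-4}` makes the boundary `C_{2n-3} → C_{2n-4}` onto; as both are
lines, it is then an isomorphism, which forces the boundary out of `C_{2n-2}` to vanish. Repeating this
two degrees at a time, the boundary out of `C_{4n-8}` vanishes, and exactness at `C_{4n-8}` would make
the 2-dimensional `C_{4n-7}` surject onto the 3-dimensional `C_{4n-8}`.
-/

open Module

section

variable {K : Type*} [Field K] {C : ℤ → Type*} [∀ k, AddCommGroup (C k)] [∀ k, Module K (C k)]
  (d : ∀ k : ℤ, C (k + 1) →ₗ[K] C k)

theorem surjective_of_exact_of_eq_zero {k : ℤ}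
    (hexact : LinearMap.ker (d k) ≤ LinearMap.range (d (k + 1))) (hzero : d k = 0) :
    Function.Surjective (d (k + 1)) := by
  rw [← LinearMap.range_eq_top, eq_top_iff]
  simpa [hzero] using hexact

theorem finrank_le_of_exact_of_eq_zero [∀ k, Module.Finite K (C k)] {k : ℤ}
    (hexact : LinearMap.ker (d k) ≤ LinearMap.range (d (k + 1))) (hzero : d k = 0) :
    finrank K (C (k + 1)) ≤ finrank K (C (k + 1 + 1)) :=
  LinearMap.finrank_le_finrank_of_surjective (surjective_of_exact_of_eq_zero d hexact hzero)

theorem eq_zero_add_two [∀ k, Module.Finite K (C k)] {k : ℤ}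
    (hdd : (d (k + 1)).comp (d (k + 1 + 1)) = 0)
    (hexact : LinearMap.ker (d k) ≤ LinearMap.range (d (k + 1)))
    (hdim : finrank K (C (k + 1 + 1)) = finrank K (C (k + 1))) (hzero : d k = 0) :
    d (k + 1 + 1) = 0 := by
  have hinj : Function.Injective (d (k + 1)) :=
    (LinearMap.injective_iff_surjective_of_finrank_eq_finrank hdim).mpr
      (surjective_of_exact_of_eq_zero d hexact hzero)
  ext x
  exact hinj (by simpa using LinearMap.congr_fun hdd x)

theorem eq_zero_add_two_mul [∀ k, Module.Finite K (C k)] (j : ℤ) (m : ℕ)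
    (hdd : ∀ k, (d k).comp (d (k + 1)) = 0)
    (hexact : ∀ k, j ≤ k → k < j + 2 * m → LinearMap.ker (d k) ≤ LinearMap.range (d (k + 1)))
    (hdim : ∀ k, j < k → k < j + 2 * m → finrank K (C (k + 1)) = finrank K (C k))
    (hzero : d j = 0) :
    d (j + 2 * m) = 0 := by
  induction m with
  | zero => rwa [Nat.cast_zero, mul_zero, add_zero]
  | succ m ih =>
    have hprev := ih (fun k h₁ h₂ ↦ hexact k h₁ (by omega)) (fun k h₁ h₂ ↦ hdim k h₁ (by omega))
    have hnext := eq_zero_add_two d (hdd _) (hexact _ (by omega) (by omega))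
      (hdim _ (by omega) (by omega)) hprev
    rwa [show j + 2 * m + 1 + 1 = j + 2 * ↑(m + 1) by push_cast; ring] at hnext

end

/-- A chain complex of `ℚ`-vector spaces (indexed by `ℤ`, with boundary map
`d k : C (k+1) → C k` of degree `-1`) whose dimensions are `0` in degrees `0 < k < 2n-4`,
`1` in degrees `2n-4 ≤ k ≤ 4n-9`, `3` in degree `4n-8` and `2` in degree `4n-7` (for some
`n > 2`) has nontrivial homology in some positive degree.  Homology in degree `k+1` is
nontrivial iff `ker (d k)` is not contained in `range (d (k+1))`. -/
theorem exotic_R4m1_nontrivial_homology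
    (n : ℤ) (hn : 2 < n)
    (C : ℤ → Type) [∀ k, AddCommGroup (C k)] [∀ k, Module ℚ (C k)]
    [∀ k, Module.Finite ℚ (C k)]
    (d : ∀ k : ℤ, C (k + 1) →ₗ[ℚ] C k)
    (hdd : ∀ k : ℤ, (d k).comp (d (k + 1)) = 0)
    (hdim0 : ∀ k : ℤ, 0 < k → k < 2 * n - 4 → finrank ℚ (C k) = 0)
    (hdim1 : ∀ k : ℤ, 2 * n - 4 ≤ k → k ≤ 4 * n - 9 → finrank ℚ (C k) = 1)
    (hdim3 : finrank ℚ (C (4 * n - 8)) = 3)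
    (hdim2 : finrank ℚ (C (4 * n - 7)) = 2) :
    ∃ k : ℤ, 0 < k + 1 ∧ ¬ (LinearMap.ker (d k) ≤ LinearMap.range (d (k + 1))) := by
  by_contra! hexact
  obtain ⟨m, hm⟩ : ∃ m : ℕ, (m : ℤ) = n - 2 := ⟨(n - 2).toNat, by omega⟩
  have hbottom : d (2 * n - 5) = 0 := by
    have : Subsingleton (C (2 * n - 5)) :=
      Module.finrank_zero_iff.mp (hdim0 _ (by omega) (by omega))
    exact Subsingleton.elim _ _
  have htop := eq_zero_add_two_mul d (2 * n - 5) m hdd (fun k _ _ ↦ hexact k (by omega))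
    (fun k _ _ ↦ by rw [hdim1 k (by omega) (by omega), hdim1 (k + 1) (by omega) (by omega)])
    hbottom
  rw [show 2 * n - 5 + 2 * (m : ℤ) = 4 * n - 9 by omega] at htop
  have hle := finrank_le_of_exact_of_eq_zero d (hexact _ (by omega)) htop
  rw [show 4 * n - 9 + 1 = 4 * n - 8 by ring, show 4 * n - 8 + 1 = 4 * n - 7 by ring,
    hdim3, hdim2] at hle
  omega
end

section
/- Let $(C_\bullet, \partial)$ be a chain complex of finite-dimensional $\mathbb{Q}$-vector spaces, let $a < b$ be integers, and suppose $\dim C_{a-1} = 0$ and $\dim C_b = 2r$ for some $r \ge 0$. If the Euler characteristic of the truncated complex $\sum_{k=a}^{b-1} (-1)^{k-a} \dim C_k$ has absolute value at least $3r$, then $\sum_{k=a}^{b-1} \dim H_k(C_\bullet) \ge r$. -/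
/-!
Rank–nullity together with `im ∂ ⊆ ker ∂` splits each `dim C_k` as
`rank ∂_k + dim H_k + rank ∂_{k+1}`, so the alternating sum of the `dim C_k` telescopes to the
alternating sum of the `dim H_k` plus `± rank ∂_a ± rank ∂_b`. Here `∂_a` maps into `C_{a-1} = 0`
and `∂_b` out of `C_b`, of dimension `2r`, so `3r ≤ |χ| ≤ ∑ dim H_k + 2r`.
-/

open Module Finset

theorem Int.sum_Icc_eq_sum_range {M : Type*} [AddCommMonoid M] (f : ℤ → M) (a b : ℤ) :
    ∑ k ∈ Icc a b, f k = ∑ i ∈ Finset.range (b + 1 - a).toNat, f (a + i) := by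
  rw [Int.Icc_eq_finset_map, sum_map]
  rfl

section Alternating

variable {R : Type*} [CommRing R]

theorem Finset.sum_range_neg_one_pow_mul_add_add_succ (f g : ℕ → R) (N : ℕ) :
    ∑ i ∈ range N, (-1) ^ i * (f i + g i + f (i + 1)) =
      ∑ i ∈ range N, (-1) ^ i * g i + f 0 - (-1) ^ N * f N := by
  induction N with
  | zero => simp
  | succ n ih => rw [sum_range_succ, sum_range_succ, ih]; ring

theorem Finset.abs_sum_range_neg_one_pow_mul_add_add_succ_le [LinearOrder R]
    [IsOrderedRing R] (f g : ℕ → R) (N : ℕ) :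
    |∑ i ∈ range N, (-1) ^ i * (f i + g i + f (i + 1))| ≤
      ∑ i ∈ range N, |g i| + |f 0| + |f N| := by
  rw [sum_range_neg_one_pow_mul_add_add_succ]
  calc |∑ i ∈ range N, (-1) ^ i * g i + f 0 - (-1) ^ N * f N|
      ≤ |∑ i ∈ range N, (-1) ^ i * g i| + |f 0| + |(-1) ^ N * f N| :=
        (abs_sub _ _).trans (add_le_add_left (abs_add_le _ _) _)
    _ ≤ ∑ i ∈ range N, |g i| + |f 0| + |f N| := by
        simp only [abs_mul, abs_neg_one_pow, one_mul]
        gcongr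
        calc _ ≤ ∑ i ∈ range N, |(-1) ^ i * g i| := abs_sum_le_sum_abs _ _
          _ = _ := by simp only [abs_mul, abs_neg_one_pow, one_mul]

end Alternating

theorem LinearMap.finrank_range_add_finrank_homology_add_finrank_range {K U V W : Type*}
    [DivisionRing K] [AddCommGroup U] [Module K U] [AddCommGroup V] [Module K V]
    [AddCommGroup W] [Module K W] [FiniteDimensional K V] (f : U →ₗ[K] V) (g : V →ₗ[K] W)
    (hgf : g.comp f = 0) :
    finrank K (range g) + finrank K (ker g ⧸ (range f).comap (ker g).subtype) +
      finrank K (range f) = finrank K V := by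
  have hfg : range f ≤ ker g := range_le_ker_iff.mpr hgf
  rw [← (Submodule.comapSubtypeEquivOfLe hfg).finrank_eq, add_assoc,
    Submodule.finrank_quotient_add_finrank, finrank_range_add_finrank_ker]

/-- Let `C` be a chain complex of finite-dimensional `ℚ`-vector spaces
(boundary `d k : C (k+1) → C k`), `a < b` integers with `dim C (a-1) = 0` and
`dim C b = 2r`.  If the Euler characteristic `∑_{k=a}^{b-1} (-1)^(k-a) dim C k` of the
truncated complex has absolute value at least `3r`, then the total dimension of the
homology in degrees `a ≤ m ≤ b-1` is at least `r`.  Homology in degree `m = j+1` is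
`ker (d j) / range (d (j+1))`, so the degrees `a ≤ m ≤ b-1` correspond to
`j ∈ [a-1, b-2]`. -/
theorem truncated_euler_char_homology_bound
    (C : ℤ → Type) [∀ k, AddCommGroup (C k)] [∀ k, Module ℚ (C k)]
    [∀ k, Module.Finite ℚ (C k)]
    (d : ∀ k : ℤ, C (k + 1) →ₗ[ℚ] C k)
    (hdd : ∀ k : ℤ, (d k).comp (d (k + 1)) = 0)
    (a b : ℤ) (hab : a < b) (r : ℕ)
    (ha : finrank ℚ (C (a - 1)) = 0)
    (hb : finrank ℚ (C b) = 2 * r)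
    (hchi : 3 * (r : ℤ) ≤
      |∑ k ∈ Finset.Icc a (b - 1), (-1 : ℤ) ^ (k - a).toNat * (finrank ℚ (C k) : ℤ)|) :
    r ≤ ∑ j ∈ Finset.Icc (a - 1) (b - 2),
      finrank ℚ
        (↥(LinearMap.ker (d j)) ⧸
          Submodule.comap (LinearMap.ker (d j)).subtype (LinearMap.range (d (j + 1)))) := by
  obtain ⟨N, rfl⟩ := Int.exists_add_of_le hab.le
  set ρ : ℤ → ℤ := fun j => finrank ℚ (LinearMap.range (d j))
  set η : ℤ → ℕ := fun j => finrank ℚ (LinearMap.ker (d j) ⧸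
    (LinearMap.range (d (j + 1))).comap (LinearMap.ker (d j)).subtype)
  have hdim (i : ℕ) : (finrank ℚ (C (a + i)) : ℤ) =
      ρ (a - 1 + i) + η (a - 1 + i) + ρ (a - 1 + (i + 1 : ℕ)) := by
    have h := LinearMap.finrank_range_add_finrank_homology_add_finrank_range _ _ (hdd (a - 1 + i))
    rw [show a + (i : ℤ) = a - 1 + i + 1 by ring, ← h]
    simp only [ρ, η, Nat.cast_add, Nat.cast_succ, ← add_assoc]
  have hρ₀ : ρ (a - 1) = 0 := by
    simp only [ρ, Nat.cast_eq_zero]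
    exact Nat.eq_zero_of_le_zero (ha ▸ Submodule.finrank_le _)
  have hρN : |ρ (a - 1 + N)| ≤ 2 * r := by
    have hb' : finrank ℚ (C (a - 1 + N + 1)) = 2 * r := by
      rw [show a - 1 + N + 1 = a + N by ring, hb]
    simp only [ρ, Nat.abs_cast]
    exact_mod_cast hb' ▸ LinearMap.finrank_range_le _
  rw [Int.sum_Icc_eq_sum_range, show (a + N - 1 + 1 - a).toNat = N by omega] at hchi
  rw [Int.sum_Icc_eq_sum_range, show (a + N - 2 + 1 - (a - 1)).toNat = N by omega]
  simp only [add_sub_cancel_left, Int.toNat_natCast, hdim] at hchi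
  have hbound := abs_sum_range_neg_one_pow_mul_add_add_succ_le
    (fun i => ρ (a - 1 + i)) (fun i => (η (a - 1 + i) : ℤ)) N
  simp only [Nat.abs_cast, Nat.cast_zero, add_zero, hρ₀, abs_zero] at hbound
  have hη : (r : ℤ) ≤ ∑ i ∈ range N, (η (a - 1 + i) : ℤ) := by linarith
  exact_mod_cast hη
end

section
/- Let $V$ be a smooth manifold with a complete flow, let $t : V \to \mathbb{R}$ and $u : V \to \mathbb{R}$ be smooth, and let $R$ be a smooth vector field. Suppose there is $T > 0$ such that on $\{t > T\}$: (a) $u \cdot (dt(R)) > 0$ wherever $u \ne 0$; (b) $du(R) > 0$ wherever $u = 0$. Then every periodic integral curve $\gamma$ of $R$ is contained in $\{t \le T\}$. -/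
/-!
Along a periodic orbit `γ`, the function `τ ↦ t (γ τ)` is periodic, so it attains a global
maximum. If that maximum exceeded `T`, its derivative `dt(R)` would vanish there, so (a) forces
`u = 0` at that point and then (b) makes `u ∘ γ` positive just afterwards. On that stretch (a)
gives `dt(R) > 0`, so `t ∘ γ` keeps increasing past its maximum, which is absurd.
-/

open Filter Set Topology

theorem Function.Periodic.exists_forall_ge_of_continuous {α : Type*} [LinearOrder α]
    [TopologicalSpace α] [ClosedIciTopology α] {f : ℝ → α} {c : ℝ} (hp : Periodic f c)
    (hc : c ≠ 0) (hf : Continuous f) : ∃ x, ∀ y, f y ≤ f x := by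
  obtain ⟨_, ⟨x, rfl⟩, hx⟩ :=
    (hp.compact_of_continuous hc hf).exists_isGreatest (range_nonempty f)
  exact ⟨x, fun y ↦ hx (mem_range_self y)⟩

theorem eventually_pos_nhdsGT_of_hasDerivAt {g : ℝ → ℝ} {g' a : ℝ} (hg : HasDerivAt g g' a)
    (hg' : 0 < g') (hga : g a = 0) : ∀ᶠ x in 𝓝[>] a, 0 < g x := by
  filter_upwards [((hg.tendsto_slope.mono_left (nhdsGT_le_nhdsNE a)).eventually
    (eventually_gt_nhds hg')), self_mem_nhdsWithin] with x hslope hx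
  exact pos_of_slope_pos hx hslope hga

theorem eventually_lt_nhdsGT_of_hasDerivAt_pos {f f' : ℝ → ℝ} {a : ℝ} (hfa : ContinuousAt f a)
    (hf : ∀ᶠ x in 𝓝[>] a, HasDerivAt f (f' x) x ∧ 0 < f' x) :
    ∀ᶠ x in 𝓝[>] a, f a < f x := by
  obtain ⟨b, hab, hsub⟩ := mem_nhdsGT_iff_exists_Ioo_subset.1 hf
  filter_upwards [Ioo_mem_nhdsGT hab] with x hx
  have hIoo : Ioo a x ⊆ Ioo a b := Ioo_subset_Ioo_right hx.2.le
  have hmono : StrictMonoOn f (Icc a x) := by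
    refine strictMonoOn_of_hasDerivWithinAt_pos (f' := f') (convex_Icc a x) ?_ ?_ ?_
    · intro y hy
      rcases hy.1.eq_or_lt with rfl | hay
      · exact hfa.continuousWithinAt
      · exact (hsub ⟨hay, hy.2.trans_lt hx.2⟩).1.continuousAt.continuousWithinAt
    · rw [interior_Icc]
      exact fun y hy ↦ (hsub (hIoo hy)).1.hasDerivWithinAt
    · rw [interior_Icc]
      exact fun y hy ↦ (hsub (hIoo hy)).2
  exact hmono (left_mem_Icc.2 hx.1.le) (right_mem_Icc.2 hx.1.le) hx.1

theorem not_isLocalMax_of_sign_conditions {f g f' g' : ℝ → ℝ} {T a : ℝ}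
    (hf : ∀ x, HasDerivAt f (f' x) x) (hg : ∀ x, HasDerivAt g (g' x) x)
    (ha : ∀ x, T < f x → g x ≠ 0 → 0 < g x * f' x)
    (hb : ∀ x, T < f x → g x = 0 → 0 < g' x) (hTa : T < f a) :
    ¬IsLocalMax f a := by
  intro hmax
  have hf'a : f' a = 0 := hmax.hasDerivAt_eq_zero (hf a)
  have hga : g a = 0 := by
    by_contra hne
    simpa [hf'a] using ha a hTa hne
  have hg_pos : ∀ᶠ x in 𝓝[>] a, 0 < g x :=
    eventually_pos_nhdsGT_of_hasDerivAt (hg a) (hb a hTa hga) hga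
  have hf_gt : ∀ᶠ x in 𝓝[>] a, T < f x :=
    ((hf a).continuousAt.eventually (lt_mem_nhds hTa)).filter_mono nhdsWithin_le_nhds
  have hincr : ∀ᶠ x in 𝓝[>] a, f a < f x := by
    refine eventually_lt_nhdsGT_of_hasDerivAt_pos (f' := f') (hf a).continuousAt ?_
    filter_upwards [hg_pos, hf_gt] with x hgx hfx
    exact ⟨hf x, pos_of_mul_pos_right (ha x hfx hgx.ne') hgx.le⟩
  obtain ⟨x, hlt, hle⟩ := (hincr.and (hmax.filter_mono nhdsWithin_le_nhds)).exists
  exact hle.not_gt hlt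

theorem periodic_orbits_confined_general
    (V : Type) [NormedAddCommGroup V] [NormedSpace ℝ V]
    (t u : V → ℝ) (ht : Differentiable ℝ t) (hu : Differentiable ℝ u)
    (R : V → V) (T : ℝ)
    (ha : ∀ x : V, T < t x → u x ≠ 0 → 0 < u x * fderiv ℝ t x (R x))
    (hb : ∀ x : V, T < t x → u x = 0 → 0 < fderiv ℝ u x (R x))
    (γ : ℝ → V) (P : ℝ) (hP : 0 < P)
    (hγ : ∀ τ : ℝ, HasDerivAt γ (R (γ τ)) τ)
    (hper : ∀ τ : ℝ, γ (τ + P) = γ τ) :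
    ∀ τ : ℝ, t (γ τ) ≤ T := by
  intro τ₀
  by_contra! hτ₀
  have hf : ∀ τ, HasDerivAt (t ∘ γ) (fderiv ℝ t (γ τ) (R (γ τ))) τ :=
    fun τ ↦ (ht _).hasFDerivAt.comp_hasDerivAt τ (hγ τ)
  have hg : ∀ τ, HasDerivAt (u ∘ γ) (fderiv ℝ u (γ τ) (R (γ τ))) τ :=
    fun τ ↦ (hu _).hasFDerivAt.comp_hasDerivAt τ (hγ τ)
  have hf_per : Function.Periodic (t ∘ γ) P := fun τ ↦ congrArg t (hper τ)
  obtain ⟨τmax, hτmax⟩ := hf_per.exists_forall_ge_of_continuous hP.ne'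
    (continuous_iff_continuousAt.2 fun τ ↦ (hf τ).continuousAt)
  exact not_isLocalMax_of_sign_conditions hf hg (fun τ ↦ ha (γ τ)) (fun τ ↦ hb (γ τ))
    (hτ₀.trans_le (hτmax τ₀)) (Eventually.of_forall hτmax)

/-- let `t, u` be smooth proper-type functions on `V` and `R` a vector field
such that, on `{t > T}`: (a) `u · dt(R) > 0` wherever `u ≠ 0`, and (b) `du(R) > 0`
wherever `u = 0`.  Then every periodic integral curve of `R` is contained in `{t ≤ T}`.
(Here `dt(R)|_x = fderiv ℝ t x (R x)`.) -/
theorem periodic_orbits_confined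
    (V : Type) [NormedAddCommGroup V] [NormedSpace ℝ V]
    (t u : V → ℝ) (ht : Differentiable ℝ t) (hu : Differentiable ℝ u)
    (R : V → V) (T : ℝ) (hT : 0 < T)
    (ha : ∀ x : V, T < t x → u x ≠ 0 → 0 < u x * fderiv ℝ t x (R x))
    (hb : ∀ x : V, T < t x → u x = 0 → 0 < fderiv ℝ u x (R x))
    (γ : ℝ → V) (P : ℝ) (hP : 0 < P)
    (hγ : ∀ τ : ℝ, HasDerivAt γ (R (γ τ)) τ)
    (hper : ∀ τ : ℝ, γ (τ + P) = γ τ) :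
    ∀ τ : ℝ, t (γ τ) ≤ T :=
  periodic_orbits_confined_general V t u ht hu R T ha hb γ P hP hγ hper
end

section
/- Let $h_1, h_2 : M \to \mathbb{R}$ be smooth functions on a manifold $M$ with $h_1 \ge h_2$ pointwise, let $v, w$ be vector fields, and suppose for $i = 1,2$: $dh_i(v) > 0$ on a subset $A \subseteq M$ and $dh_i(w) > 0$ on a subset $B \subseteq M$. Let $\rho : M \to [0,1]$ be smooth with $d\rho(v) = 0$ everywhere and $d\rho(w) \le 0$ everywhere. Then $h := \rho h_1 + (1-\rho) h_2$ satisfies $dh(v) > 0$ on $A$ and $dh(w) > 0$ on $B$. -/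
/-!
Differentiating `ρ h₁ + (1 - ρ) h₂` gives `dρ · (h₁ - h₂) + (ρ dh₁ + (1 - ρ) dh₂)`. The second
summand is a convex combination of two positive numbers, hence positive; the first vanishes
along `v` and is nonnegative along `w`.
-/

theorem fderiv_interpolation_apply {E : Type*} [NormedAddCommGroup E] [NormedSpace ℝ E]
    {ρ f g : E → ℝ} {x : E} (hρ : DifferentiableAt ℝ ρ x) (hf : DifferentiableAt ℝ f x)
    (hg : DifferentiableAt ℝ g x) (u : E) :
    fderiv ℝ (fun y => ρ y * f y + (1 - ρ y) * g y) x u =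
      fderiv ℝ ρ x u * (f x - g x) + (ρ x * fderiv ℝ f x u + (1 - ρ x) * fderiv ℝ g x u) := by
  have hderiv := (hρ.hasFDerivAt.fun_mul hf.hasFDerivAt).fun_add
    ((hρ.hasFDerivAt.const_sub 1).fun_mul hg.hasFDerivAt)
  rw [hderiv.fderiv]
  simp only [add_apply, smul_apply, neg_apply, smul_eq_mul]
  ring

theorem convex_combination_pos {t a b : ℝ} (ht : t ∈ Set.Icc (0 : ℝ) 1) (ha : 0 < a)
    (hb : 0 < b) : 0 < t * a + (1 - t) * b :=
  convex_Ioi (0 : ℝ) ha hb ht.1 (sub_nonneg.2 ht.2) (add_sub_cancel t 1)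

theorem interpolated_hamiltonian_derivative_pos_general
    (M : Type) [NormedAddCommGroup M] [NormedSpace ℝ M]
    (h₁ h₂ : M → ℝ) (hh₁ : Differentiable ℝ h₁) (hh₂ : Differentiable ℝ h₂)
    (v w : M → M) (A B : Set M)
    (hv₁ : ∀ x ∈ A, 0 < fderiv ℝ h₁ x (v x)) (hv₂ : ∀ x ∈ A, 0 < fderiv ℝ h₂ x (v x))
    (hw₁ : ∀ x ∈ B, 0 < fderiv ℝ h₁ x (w x)) (hw₂ : ∀ x ∈ B, 0 < fderiv ℝ h₂ x (w x))
    (ρ : M → ℝ) (hρ : Differentiable ℝ ρ) (hρ01 : ∀ x, ρ x ∈ Set.Icc (0 : ℝ) 1)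
    (hρv : ∀ x, fderiv ℝ ρ x (v x) = 0)
    (hρw : ∀ x, 0 ≤ fderiv ℝ ρ x (w x) * (h₁ x - h₂ x)) :
    (∀ x ∈ A, 0 < fderiv ℝ (fun y => ρ y * h₁ y + (1 - ρ y) * h₂ y) x (v x)) ∧
    (∀ x ∈ B, 0 < fderiv ℝ (fun y => ρ y * h₁ y + (1 - ρ y) * h₂ y) x (w x)) := by
  have hderiv x u := fderiv_interpolation_apply (hρ x) (hh₁ x) (hh₂ x) u
  refine ⟨fun x hx => ?_, fun x hx => ?_⟩
  · rw [hderiv, hρv, zero_mul, zero_add]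
    exact convex_combination_pos (hρ01 x) (hv₁ x hx) (hv₂ x hx)
  · rw [hderiv]
    exact add_pos_of_nonneg_of_pos (hρw x)
      (convex_combination_pos (hρ01 x) (hw₁ x hx) (hw₂ x hx))

/-- interpolation of contact Hamiltonians (core of the interpolation lemma).
If `h₁ ≥ h₂`, `dhᵢ(v) > 0` on `A` and `dhᵢ(w) > 0` on `B` for `i = 1,2`, and
`ρ : M → [0,1]` satisfies `dρ(v) = 0` and `dρ(w)(h₁ - h₂) ≥ 0` (the sign convention making
the extra term nonnegative), then `h = ρ h₁ + (1-ρ) h₂` satisfies `dh(v) > 0` on `A` and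
`dh(w) > 0` on `B`. -/
theorem interpolated_hamiltonian_derivative_pos
    (M : Type) [NormedAddCommGroup M] [NormedSpace ℝ M]
    (h₁ h₂ : M → ℝ) (hh₁ : Differentiable ℝ h₁) (hh₂ : Differentiable ℝ h₂)
    (hle : ∀ x, h₂ x ≤ h₁ x)
    (v w : M → M) (A B : Set M)
    (hv₁ : ∀ x ∈ A, 0 < fderiv ℝ h₁ x (v x)) (hv₂ : ∀ x ∈ A, 0 < fderiv ℝ h₂ x (v x))
    (hw₁ : ∀ x ∈ B, 0 < fderiv ℝ h₁ x (w x)) (hw₂ : ∀ x ∈ B, 0 < fderiv ℝ h₂ x (w x))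
    (ρ : M → ℝ) (hρ : Differentiable ℝ ρ) (hρ01 : ∀ x, ρ x ∈ Set.Icc (0 : ℝ) 1)
    (hρv : ∀ x, fderiv ℝ ρ x (v x) = 0)
    (hρw : ∀ x, 0 ≤ fderiv ℝ ρ x (w x) * (h₁ x - h₂ x)) :
    (∀ x ∈ A, 0 < fderiv ℝ (fun y => ρ y * h₁ y + (1 - ρ y) * h₂ y) x (v x)) ∧
    (∀ x ∈ B, 0 < fderiv ℝ (fun y => ρ y * h₁ y + (1 - ρ y) * h₂ y) x (w x)) :=
  interpolated_hamiltonian_derivative_pos_general M h₁ h₂ hh₁ hh₂ v w A B hv₁ hv₂ hw₁ hw₂ ρ hρ hρ01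
    hρv hρw
end
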